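/- (Relative entropy decomposition for product reference states.) Let Γ be a positive definite density matrix on ℂᵐ ⊗ ℂⁿ (i.e. a positive definite Hermitian matrix indexed by (Fin m × Fin n) with trace 1), and let A, B be positive definite density matrices on ℂᵐ and ℂⁿ respectively. Let Γ₁ be the partial trace of Γ over the second factor, (Γ₁)_{i,i'} = Σ_j Γ_{(i,j),(i',j)}, and Γ₂ the partial trace over the first factor, (Γ₂)_{j,j'} = Σ_i Γ_{(i,j),(i,j')}; both are positive definite density matrices. Then H(Γ, A ⊗ B) = H(Γ, Γ₁ ⊗ Γ₂) + H(Γ₁, A) + H(Γ₂, B), where ⊗ denotes the Kronecker product. -/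

import Mathlib

open Matrix
open scoped Kronecker ComplexOrder

/-- Functional calculus for Hermitian matrices: apply `f` to the eigenvalues. -/
noncomputable def matFun {ι : Type*} [Fintype ι] [DecidableEq ι]
    (f : ℝ → ℝ) (M : Matrix ι ι ℂ) : Matrix ι ι ℂ :=
  if h : M.IsHermitian then
    (h.eigenvectorUnitary : Matrix ι ι ℂ) *
      Matrix.diagonal (fun i => (f (h.eigenvalues i) : ℂ)) *
      star (h.eigenvectorUnitary : Matrix ι ι ℂ)
  else 0

/-- Matrix logarithm via the functional calculus. -/
noncomputable def matLog {ι : Type*} [Fintype ι] [DecidableEq ι] (M : Matrix ι ι ℂ) :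
    Matrix ι ι ℂ :=
  matFun Real.log M

/-- The quantum relative entropy `H(Γ, Γ') = Tr[Γ (log Γ - log Γ')]`. -/
noncomputable def relEnt {ι : Type*} [Fintype ι] [DecidableEq ι] (Γ Γ' : Matrix ι ι ℂ) : ℂ :=
  (Γ * (matLog Γ - matLog Γ')).trace

/-- Partial trace over the second tensor factor. -/
noncomputable def ptrace₂ {m n : ℕ} (Γ : Matrix (Fin m × Fin n) (Fin m × Fin n) ℂ) :
    Matrix (Fin m) (Fin m) ℂ :=
  Matrix.of fun i i' => ∑ j : Fin n, Γ (i, j) (i', j)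

/-- Partial trace over the first tensor factor. -/
noncomputable def ptrace₁ {m n : ℕ} (Γ : Matrix (Fin m × Fin n) (Fin m × Fin n) ℂ) :
    Matrix (Fin n) (Fin n) ℂ :=
  Matrix.of fun j j' => ∑ i : Fin m, Γ (i, j) (i, j')


/-!
Diagonalise `A = U diag(a) U⋆` and `B = V diag(b) V⋆`. Then `A ⊗ B = (U ⊗ V) diag(aᵢ bⱼ) (U ⊗ V)⋆`,
and `log (aᵢ bⱼ) = log aᵢ + log bⱼ` gives `log (A ⊗ B) = log A ⊗ 1 + 1 ⊗ log B`. With the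
marginals `Γ₁ = ptrace₂ Γ` and `Γ₂ = ptrace₁ Γ` we have `Tr[Γ (X ⊗ 1)] = Tr[Γ₁ X]` and
`Tr[Γ (1 ⊗ Y)] = Tr[Γ₂ Y]`, so `H(Γ, X ⊗ Y) = Tr[Γ log Γ] - Tr[Γ₁ log X] - Tr[Γ₂ log Y]` for all
positive definite `X`, `Y`. Using this for `(A, B)` and for `(Γ₁, Γ₂)`, the identity telescopes.
The marginals are positive definite because `Γ₁ = ∑ⱼ Γ.submatrix (·, j) (·, j)` is a nonempty sum
of compressions of `Γ`.
-/

open Polynomial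

section FunctionalCalculus

variable {ι : Type*} [Fintype ι] [DecidableEq ι]

lemma aeval_diagonal_ofReal (d : ι → ℝ) (p : ℝ[X]) :
    aeval (diagonal fun i => (d i : ℂ)) p = diagonal fun i => ((p.eval (d i) : ℝ) : ℂ) := by
  rw [← diagonalAlgHom_apply ℝ, aeval_algHom_apply, aeval_pi_apply]
  simp [← Complex.coe_algebraMap, aeval_algebraMap_apply_eq_algebraMap_eval]

lemma aeval_unitary_conj_diagonal (U : unitary (Matrix ι ι ℂ)) (d : ι → ℝ) (p : ℝ[X]) :
    aeval ((U : Matrix ι ι ℂ) * diagonal (fun i => (d i : ℂ)) * star (U : Matrix ι ι ℂ)) p =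
      U * diagonal (fun i => ((p.eval (d i) : ℝ) : ℂ)) * star (U : Matrix ι ι ℂ) := by
  rw [← Unitary.conjStarAlgAut_apply (S := ℝ), ← Unitary.conjStarAlgAut_apply (S := ℝ),
    ← aeval_diagonal_ofReal]
  exact aeval_algHom_apply (Unitary.conjStarAlgAut ℝ _ U) _ p

lemma isHermitian_unitary_conj_diagonal (U : unitary (Matrix ι ι ℂ)) (d : ι → ℝ) :
    ((U : Matrix ι ι ℂ) * diagonal (fun i => (d i : ℂ)) * star (U : Matrix ι ι ℂ)).IsHermitian := by
  rw [← Unitary.conjStarAlgAut_apply (S := ℂ)]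
  exact IsSelfAdjoint.map (isHermitian_diagonal_iff.mpr fun i => Complex.conj_ofReal (d i)) _

lemma Matrix.IsHermitian.eq_eigenvectorUnitary_mul_diagonal_mul_star {A : Matrix ι ι ℂ}
    (hA : A.IsHermitian) :
    A = (hA.eigenvectorUnitary : Matrix ι ι ℂ) * diagonal (fun i => (hA.eigenvalues i : ℂ)) *
      star (hA.eigenvectorUnitary : Matrix ι ι ℂ) :=
  hA.spectral_theorem.trans (Unitary.conjStarAlgAut_apply ..)

/-- `matFun` is defined through the eigenbasis chosen by `IsHermitian.eigenvectorUnitary`; it does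
not depend on that choice, since on a finite spectrum `f` agrees with an interpolating
polynomial. -/
lemma matFun_unitary_conj_diagonal (f : ℝ → ℝ) (U : unitary (Matrix ι ι ℂ)) (d : ι → ℝ) :
    matFun f ((U : Matrix ι ι ℂ) * diagonal (fun i => (d i : ℂ)) * star (U : Matrix ι ι ℂ)) =
      U * diagonal (fun i => (f (d i) : ℂ)) * star (U : Matrix ι ι ℂ) := by
  have hM := isHermitian_unitary_conj_diagonal U d
  set s := Finset.univ.image d ∪ Finset.univ.image hM.eigenvalues
  set p := Lagrange.interpolate s id f
  have hp (V : unitary (Matrix ι ι ℂ)) (e : ι → ℝ) (he : ∀ i, e i ∈ s) :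
      (V : Matrix ι ι ℂ) * diagonal (fun i => (f (e i) : ℂ)) * star (V : Matrix ι ι ℂ) =
        aeval ((V : Matrix ι ι ℂ) * diagonal (fun i => (e i : ℂ)) * star (V : Matrix ι ι ℂ)) p := by
    have hpe (i : ι) : p.eval (e i) = f (e i) :=
      Lagrange.eval_interpolate_at_node (v := id) f (Set.injOn_id _) (he i)
    simp only [aeval_unitary_conj_diagonal, hpe]
  rw [matFun, dif_pos hM, hp _ _ (fun i => by simp [s]), hp _ _ (fun i => by simp [s]),
    ← hM.eq_eigenvectorUnitary_mul_diagonal_mul_star]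

end FunctionalCalculus

section Kronecker

variable {ι κ : Type*}

lemma kronecker_conj_kronecker [Fintype ι] [Fintype κ] (U X : Matrix ι ι ℂ) (V Y : Matrix κ κ ℂ) :
    (U ⊗ₖ V) * (X ⊗ₖ Y) * star (U ⊗ₖ V) = (U * X * star U) ⊗ₖ (V * Y * star V) := by
  simp only [star_eq_conjTranspose, conjTranspose_kronecker, mul_kronecker_mul]

lemma diagonal_add_eq_kronecker [DecidableEq ι] [DecidableEq κ] (a : ι → ℂ) (b : κ → ℂ) :
    diagonal (fun p : ι × κ => a p.1 + b p.2) = diagonal a ⊗ₖ 1 + 1 ⊗ₖ diagonal b := by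
  simp only [← diagonal_one, diagonal_kronecker_diagonal, diagonal_add, mul_one, one_mul]

lemma matLog_kronecker [Fintype ι] [DecidableEq ι] [Fintype κ] [DecidableEq κ]
    {A : Matrix ι ι ℂ} {B : Matrix κ κ ℂ} (hA : A.PosDef) (hB : B.PosDef) :
    matLog (A ⊗ₖ B) = matLog A ⊗ₖ 1 + 1 ⊗ₖ matLog B := by
  set U := hA.1.eigenvectorUnitary
  set V := hB.1.eigenvectorUnitary
  set a := hA.1.eigenvalues
  set b := hB.1.eigenvalues
  have hAB : A ⊗ₖ B = (U ⊗ₖ V : Matrix (ι × κ) (ι × κ) ℂ) *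
      diagonal (fun p => ((a p.1 * b p.2 : ℝ) : ℂ)) * star (U ⊗ₖ V : Matrix (ι × κ) (ι × κ) ℂ) := by
    conv_lhs => rw [hA.1.eq_eigenvectorUnitary_mul_diagonal_mul_star,
      hB.1.eq_eigenvectorUnitary_mul_diagonal_mul_star]
    rw [← kronecker_conj_kronecker, diagonal_kronecker_diagonal]
    simp_rw [Complex.ofReal_mul]
    rfl
  have hlog : diagonal (fun p => (Real.log (a p.1 * b p.2) : ℂ)) =
      diagonal (fun i => (Real.log (a i) : ℂ)) ⊗ₖ 1 +
        1 ⊗ₖ diagonal (fun j => (Real.log (b j) : ℂ)) := by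
    rw [← diagonal_add_eq_kronecker]
    congr 1 with p
    rw [Real.log_mul (hA.eigenvalues_pos _).ne' (hB.eigenvalues_pos _).ne', Complex.ofReal_add]
  have hlogA :
      matLog A = U * diagonal (fun i => (Real.log (a i) : ℂ)) * star (U : Matrix ι ι ℂ) := by
    rw [matLog, matFun, dif_pos hA.1]
  have hlogB :
      matLog B = V * diagonal (fun j => (Real.log (b j) : ℂ)) * star (V : Matrix κ κ ℂ) := by
    rw [matLog, matFun, dif_pos hB.1]
  rw [matLog, hAB, matFun_unitary_conj_diagonal _ ⟨_, kronecker_mem_unitary U.2 V.2⟩, hlog, mul_add,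
    add_mul, kronecker_conj_kronecker, kronecker_conj_kronecker, hlogA, hlogB, mul_one, mul_one,
    mem_unitaryGroup_iff.mp U.2, mem_unitaryGroup_iff.mp V.2]

end Kronecker

section PartialTrace

variable {m n : ℕ} (Γ : Matrix (Fin m × Fin n) (Fin m × Fin n) ℂ)

lemma ptrace₂_eq_sum_submatrix : ptrace₂ Γ = ∑ j, Γ.submatrix (·, j) (·, j) := by
  ext; simp [ptrace₂, Matrix.sum_apply]

lemma ptrace₁_eq_sum_submatrix : ptrace₁ Γ = ∑ i, Γ.submatrix (i, ·) (i, ·) := by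
  ext; simp [ptrace₁, Matrix.sum_apply]

lemma trace_ptrace₂ : (ptrace₂ Γ).trace = Γ.trace := by
  simp [trace, ptrace₂, Fintype.sum_prod_type]

lemma trace_ptrace₁ : (ptrace₁ Γ).trace = Γ.trace := by
  simp only [trace, ptrace₁, diag, of_apply, Fintype.sum_prod_type]
  exact Finset.sum_comm

variable {Γ}

lemma posDef_ptrace₂ [NeZero n] (hΓ : Γ.PosDef) : (ptrace₂ Γ).PosDef := by
  rw [ptrace₂_eq_sum_submatrix]
  exact posDef_sum Finset.univ_nonempty fun j _ => hΓ.submatrix (Prod.mk_left_injective j)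

lemma posDef_ptrace₁ [NeZero m] (hΓ : Γ.PosDef) : (ptrace₁ Γ).PosDef := by
  rw [ptrace₁_eq_sum_submatrix]
  exact posDef_sum Finset.univ_nonempty fun i _ => hΓ.submatrix (Prod.mk_right_injective i)

variable (Γ)

lemma trace_mul_kronecker_one (X : Matrix (Fin m) (Fin m) ℂ) :
    (Γ * (X ⊗ₖ 1)).trace = (ptrace₂ Γ * X).trace := by
  simp only [trace, diag_apply, mul_apply, kroneckerMap_apply, one_apply, mul_ite, mul_one,
    mul_zero, Fintype.sum_prod_type, Finset.sum_ite_eq', Finset.mem_univ, ↓reduceIte, ptrace₂,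
    of_apply, Finset.sum_mul]
  exact Finset.sum_congr rfl fun i _ => Finset.sum_comm

lemma trace_mul_one_kronecker (Y : Matrix (Fin n) (Fin n) ℂ) :
    (Γ * (1 ⊗ₖ Y)).trace = (ptrace₁ Γ * Y).trace := by
  simp only [trace, diag_apply, mul_apply, kroneckerMap_apply, one_apply, ite_mul, one_mul,
    zero_mul, mul_ite, mul_zero, Fintype.sum_prod_type, Finset.sum_ite_irrel,
    Finset.sum_const_zero, Finset.sum_ite_eq', Finset.mem_univ, ↓reduceIte, ptrace₁, of_apply,
    Finset.sum_mul]
  rw [Finset.sum_comm]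
  exact Finset.sum_congr rfl fun j _ => Finset.sum_comm

end PartialTrace

lemma relEnt_eq_sub {ι : Type*} [Fintype ι] [DecidableEq ι] (Γ Γ' : Matrix ι ι ℂ) :
    relEnt Γ Γ' = (Γ * matLog Γ).trace - (Γ * matLog Γ').trace := by
  rw [relEnt, mul_sub, trace_sub]

lemma relEnt_kronecker {m n : ℕ} (Γ : Matrix (Fin m × Fin n) (Fin m × Fin n) ℂ)
    {X : Matrix (Fin m) (Fin m) ℂ} {Y : Matrix (Fin n) (Fin n) ℂ} (hX : X.PosDef) (hY : Y.PosDef) :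
    relEnt Γ (X ⊗ₖ Y) = (Γ * matLog Γ).trace - (ptrace₂ Γ * matLog X).trace -
      (ptrace₁ Γ * matLog Y).trace := by
  rw [relEnt_eq_sub, matLog_kronecker hX hY, mul_add, trace_add, trace_mul_kronecker_one,
    trace_mul_one_kronecker]
  ring

theorem relEnt_product_decomposition_general {m n : ℕ}
    (Γ : Matrix (Fin m × Fin n) (Fin m × Fin n) ℂ) (hΓ : Γ.PosDef) (hΓtr : Γ.trace = 1)
    (A : Matrix (Fin m) (Fin m) ℂ) (hA : A.PosDef)
    (B : Matrix (Fin n) (Fin n) ℂ) (hB : B.PosDef) :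
    ((ptrace₂ Γ).PosDef ∧ (ptrace₂ Γ).trace = 1) ∧
    ((ptrace₁ Γ).PosDef ∧ (ptrace₁ Γ).trace = 1) ∧
    relEnt Γ (A ⊗ₖ B) =
      relEnt Γ (ptrace₂ Γ ⊗ₖ ptrace₁ Γ) + relEnt (ptrace₂ Γ) A + relEnt (ptrace₁ Γ) B := by
  have : NeZero m := ⟨by rintro rfl; simp [trace] at hΓtr⟩
  have : NeZero n := ⟨by rintro rfl; simp [trace] at hΓtr⟩
  refine ⟨⟨posDef_ptrace₂ hΓ, (trace_ptrace₂ Γ).trans hΓtr⟩,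
    ⟨posDef_ptrace₁ hΓ, (trace_ptrace₁ Γ).trans hΓtr⟩, ?_⟩
  rw [relEnt_kronecker Γ hA hB, relEnt_kronecker Γ (posDef_ptrace₂ hΓ) (posDef_ptrace₁ hΓ),
    relEnt_eq_sub, relEnt_eq_sub]
  ring

/-- **Relative entropy decomposition for product reference states.**  For a positive definite
density matrix `Γ` on `ℂᵐ ⊗ ℂⁿ` with marginals `Γ₁, Γ₂` (which are themselves positive
definite density matrices) and positive definite density matrices `A` on `ℂᵐ`, `B` on `ℂⁿ`,
`H(Γ, A ⊗ B) = H(Γ, Γ₁ ⊗ Γ₂) + H(Γ₁, A) + H(Γ₂, B)`. -/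
theorem relEnt_product_decomposition {m n : ℕ}
    (Γ : Matrix (Fin m × Fin n) (Fin m × Fin n) ℂ) (hΓ : Γ.PosDef) (hΓtr : Γ.trace = 1)
    (A : Matrix (Fin m) (Fin m) ℂ) (hA : A.PosDef) (hAtr : A.trace = 1)
    (B : Matrix (Fin n) (Fin n) ℂ) (hB : B.PosDef) (hBtr : B.trace = 1) :
    ((ptrace₂ Γ).PosDef ∧ (ptrace₂ Γ).trace = 1) ∧
    ((ptrace₁ Γ).PosDef ∧ (ptrace₁ Γ).trace = 1) ∧
    relEnt Γ (A ⊗ₖ B) =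
      relEnt Γ (ptrace₂ Γ ⊗ₖ ptrace₁ Γ) + relEnt (ptrace₂ Γ) A + relEnt (ptrace₁ Γ) B :=
  relEnt_product_decomposition_general Γ hΓ hΓtr A hA B hB
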